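/- arXiv:2305.16847 — 3 statements merged into one kernel-verified Lean document; each statement's English description precedes it below -/
import Mathlib

section
/- Let P be a bounded graded poset. If P is bowtie free, then P is a lattice. -/
/-!
Among the upper bounds of two incomparable elements `a, b`, choose a minimal one `m` (ranks make
`<` well founded). If some upper bound `v` were not above `m`, then `a, b, m, v` would form a
bowtie, and the element `z` between them would be an upper bound below `m`, hence `m` itself,
forcing `m ≤ v`. Meets follow by duality, the rank being bounded by that of `⊤`.
-/

def BowtieFree (P : Type*) [PartialOrder P] : Prop :=
  ∀ x1 x2 y1 y2 : P,
    x1 ≠ x2 → x1 ≠ y1 → x1 ≠ y2 → x2 ≠ y1 → x2 ≠ y2 → y1 ≠ y2 →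
    x1 < y1 → x1 < y2 → x2 < y1 → x2 < y2 →
    ∃ z : P, x1 ≤ z ∧ x2 ≤ z ∧ z ≤ y1 ∧ z ≤ y2

section

variable {P : Type*} [PartialOrder P]

namespace BowtieFree

theorem exists_between (h : BowtieFree P) {x1 x2 y1 y2 : P} (hx : x1 ≠ x2) (hy : y1 ≠ y2)
    (h11 : x1 < y1) (h12 : x1 < y2) (h21 : x2 < y1) (h22 : x2 < y2) :
    ∃ z : P, x1 ≤ z ∧ x2 ≤ z ∧ z ≤ y1 ∧ z ≤ y2 :=
  h x1 x2 y1 y2 hx h11.ne h12.ne h21.ne h22.ne hy h11 h12 h21 h22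

theorem dual (h : BowtieFree P) : BowtieFree Pᵒᵈ :=
  fun _ _ _ _ hx _ _ _ _ hy h11 h12 h21 h22 =>
    let ⟨z, h1z, h2z, hz1, hz2⟩ := h.exists_between hy hx h11 h21 h12 h22
    ⟨z, hz1, hz2, h1z, h2z⟩

end BowtieFree

theorem left_lt_of_mem_upperBounds_pair {a b v : P} (hba : ¬b ≤ a)
    (hv : v ∈ upperBounds {a, b}) : a < v :=
  (hv (by simp)).lt_of_not_ge fun hva => hba ((hv (by simp)).trans hva)

theorem isLUB_pair_of_le {a b : P} (hab : a ≤ b) : IsLUB {a, b} b :=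
  IsGreatest.isLUB ⟨by simp, by simp [hab]⟩

theorem BowtieFree.isLUB_of_minimal (h : BowtieFree P) {a b m : P} (hab : ¬a ≤ b)
    (hba : ¬b ≤ a) (hm : Minimal (· ∈ upperBounds {a, b}) m) : IsLUB {a, b} m := by
  refine ⟨hm.prop, fun v hv => ?_⟩
  by_contra hmv
  have hupper {u : P} (hu : u ∈ upperBounds {a, b}) : a < u ∧ b < u :=
    ⟨left_lt_of_mem_upperBounds_pair hba hu,
      left_lt_of_mem_upperBounds_pair hab (Set.pair_comm a b ▸ hu)⟩
  obtain ⟨z, haz, hbz, hzm, hzv⟩ := h.exists_between (ne_of_not_le hab)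
    (fun hm_eq => hmv hm_eq.le) (hupper hm.prop).1 (hupper hv).1 (hupper hm.prop).2 (hupper hv).2
  have hz : z ∈ upperBounds {a, b} := by simp [upperBounds_insert, haz, hbz]
  exact hmv (hm.eq_of_le hz hzm ▸ hzv)

theorem BowtieFree.exists_isLUB [WellFoundedLT P] (h : BowtieFree P) (a b : P)
    (hbdd : (upperBounds {a, b}).Nonempty) : ∃ j, IsLUB {a, b} j := by
  by_cases hab : a ≤ b
  · exact ⟨b, isLUB_pair_of_le hab⟩
  by_cases hba : b ≤ a
  · exact ⟨a, Set.pair_comm a b ▸ isLUB_pair_of_le hba⟩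
  obtain ⟨m, hm⟩ := exists_minimal_of_wellFoundedLT _ hbdd
  exact ⟨m, h.isLUB_of_minimal hab hba hm⟩

theorem StrictMono.wellFoundedGT_of_orderTop [OrderTop P] {rk : P → ℕ} (hrk : StrictMono rk) :
    WellFoundedGT P :=
  StrictAnti.wellFoundedGT (f := fun x => rk ⊤ - rk x) fun x y hxy => by
    have hy_top := hrk.monotone (le_top : y ≤ ⊤)
    have hxy_rk := hrk hxy
    dsimp only
    omega

end

/-- **A bounded graded bowtie-free poset is a lattice.**
Let `P` be a bounded poset (with greatest and least elements) that is graded (carries a rank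
function that is strictly monotone and increases by one along covering relations).  If `P` is
bowtie free — for any four mutually distinct elements `x1, x2, y1, y2` with `x_i < y_j` for all
`i, j ∈ {1,2}` there exists `z` with `x_i ≤ z ≤ y_j` for all `i, j` — then `P` is a lattice:
every pair of elements has a join and a meet. -/
theorem bounded_graded_bowtie_free_is_lattice {P : Type*} [PartialOrder P] [BoundedOrder P]
    (hgraded : ∃ rk : P → ℕ, StrictMono rk ∧ ∀ a b : P, a ⋖ b → rk b = rk a + 1)
    (hbowtie : ∀ x1 x2 y1 y2 : P,
      x1 ≠ x2 → x1 ≠ y1 → x1 ≠ y2 → x2 ≠ y1 → x2 ≠ y2 → y1 ≠ y2 →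
      x1 < y1 → x1 < y2 → x2 < y1 → x2 < y2 →
      ∃ z : P, x1 ≤ z ∧ x2 ≤ z ∧ z ≤ y1 ∧ z ≤ y2) :
    ∀ a b : P, (∃ j : P, IsLUB {a, b} j) ∧ (∃ m : P, IsGLB {a, b} m) := by
  obtain ⟨rk, hrk, -⟩ := hgraded
  have : WellFoundedLT P := hrk.wellFoundedLT
  have : WellFoundedGT P := hrk.wellFoundedGT_of_orderTop
  intro a b
  exact ⟨BowtieFree.exists_isLUB hbowtie a b ⟨⊤, fun _ _ => le_top⟩,
    BowtieFree.exists_isLUB (BowtieFree.dual hbowtie) (OrderDual.toDual a) (OrderDual.toDual b)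
      ⟨⊤, fun _ _ => le_top⟩⟩
end

section
/- Let (W, S) be a Coxeter system with Coxeter diagram Λ (the graph on vertex set S with an edge between s and t whenever m(s,t) ≥ 3). Fix s ∈ S and set I = S \ {s}. Let w ∈ W \ W_I be the minimal length element of its coset W_I w. Then s ∈ Supp(w), and Supp(w) is irreducible: it cannot be partitioned into two nonempty subsets J_1 and J_2 such that every element of J_1 commutes with every element of J_2. Equivalently, Supp(w) spans a connected subgraph of Λ. -/
/-!
If `w` is minimal in `W_I w` and a reduced word `ω` of `w` splits into letters from a set
`J ⊆ I` and letters outside `J` that commute with them, then `w = u * v` with `u ∈ W_I` spelled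
by the `J`-letters of `ω` and `v` by the remaining ones; minimality forces `ℓ(w) ≤ ℓ(v)`, so `ω`
has no `J`-letters at all. A splitting of `Supp(w)` into commuting parts puts `s` in one part,
and the other part lies in `I`, so it is empty. That `s ∈ Supp(w)` is just `w ∉ W_I`.
-/

namespace CoxeterSystem

variable {B W : Type*} [Group W] {M : CoxeterMatrix B} (cs : CoxeterSystem M W)

def support (w : W) : Set B :=
  {b | ∃ ω : List B, cs.IsReduced ω ∧ cs.wordProd ω = w ∧ b ∈ ω}

/-- `w` is the minimal length element of its right coset `W_I w`. -/
def IsMinimalInCoset (I : Set B) (w : W) : Prop :=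
  ∀ v ∈ Subgroup.closure (cs.simple '' I), cs.length w ≤ cs.length (v * w)

theorem wordProd_mem_closure_simple {I : Set B} {ω : List B} (h : ∀ b ∈ ω, b ∈ I) :
    cs.wordProd ω ∈ Subgroup.closure (cs.simple '' I) :=
  Subgroup.list_prod_mem _ fun _ hx => by
    obtain ⟨b, hb, rfl⟩ := List.mem_map.mp hx
    exact Subgroup.subset_closure ⟨b, h b hb, rfl⟩

theorem wordProd_eq_filter_mul_filter_not (J : Set B) [DecidablePred (· ∈ J)] (ω : List B)
    (hcomm : ∀ a ∈ ω, ∀ b ∈ ω, a ∈ J → b ∉ J → Commute (cs.simple a) (cs.simple b)) :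
    cs.wordProd ω = cs.wordProd (ω.filter (· ∈ J)) * cs.wordProd (ω.filter (· ∉ J)) := by
  induction ω with
  | nil => simp
  | cons a t ih =>
    have ih := ih fun x hx y hy => hcomm x (.tail _ hx) y (.tail _ hy)
    by_cases ha : a ∈ J
    · simp [ha, wordProd_cons, ih, mul_assoc]
    · have hswap : Commute (cs.wordProd (t.filter (· ∈ J))) (cs.simple a) :=
        Commute.list_prod_left _ _ fun x hx => by
          obtain ⟨b, hb, rfl⟩ := List.mem_map.mp hx
          obtain ⟨hbt, hbJ⟩ := List.mem_filter.mp hb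
          exact hcomm b (.tail _ hbt) a (.head _) (by simpa using hbJ) ha
      simp [ha, wordProd_cons, ih, ← mul_assoc, hswap.eq]

theorem mem_support_of_notMem_closure {w : W} (s : B)
    (hw : w ∉ Subgroup.closure (cs.simple '' {b | b ≠ s})) : s ∈ cs.support w := by
  obtain ⟨ω, hred, hω⟩ := cs.exists_isReduced w
  by_contra hs
  refine hw (hω.symm ▸ cs.wordProd_mem_closure_simple fun b hb (hbs : b = s) => ?_)
  exact hs ⟨ω, hred, hω.symm, hbs ▸ hb⟩

variable {cs}

theorem IsMinimalInCoset.forall_notMem_of_commute {I J : Set B} {w : W}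
    (hmin : cs.IsMinimalInCoset I w) (hJI : J ⊆ I) {ω : List B} (hred : cs.IsReduced ω)
    (hω : cs.wordProd ω = w)
    (hcomm : ∀ a ∈ ω, ∀ b ∈ ω, a ∈ J → b ∉ J → Commute (cs.simple a) (cs.simple b)) :
    ∀ b ∈ ω, b ∉ J := by
  classical
  set ωJ := ω.filter (· ∈ J)
  set ωJc := ω.filter (· ∉ J)
  have hu : cs.wordProd ωJ ∈ Subgroup.closure (cs.simple '' I) :=
    cs.wordProd_mem_closure_simple fun b hb => hJI (by simpa using (List.mem_filter.mp hb).2)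
  have hv : (cs.wordProd ωJ)⁻¹ * w = cs.wordProd ωJc := by
    rw [← hω, cs.wordProd_eq_filter_mul_filter_not J ω hcomm, inv_mul_cancel_left]
  have hlen : ωJ.length + ωJc.length = ω.length := by
    simp [ωJ, ωJc, ω.length_eq_length_filter_add (· ∈ J)]
  have hle : ω.length ≤ ωJc.length :=
    calc ω.length = cs.length w := by rw [← hω, hred]
      _ ≤ cs.length ((cs.wordProd ωJ)⁻¹ * w) := hmin _ (inv_mem hu)
      _ ≤ ωJc.length := hv ▸ cs.length_wordProd_le ωJc
  have hnil : ωJ = [] := List.eq_nil_of_length_eq_zero (by omega)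
  simpa [ωJ, List.filter_eq_nil_iff] using hnil

theorem IsMinimalInCoset.eq_empty_of_union_eq_support {s : B} {w : W}
    (hmin : cs.IsMinimalInCoset {b | b ≠ s} w) {J₁ J₂ : Set B} (hdisj : Disjoint J₁ J₂)
    (hunion : J₁ ∪ J₂ = cs.support w)
    (hcomm : ∀ b₁ ∈ J₁, ∀ b₂ ∈ J₂, Commute (cs.simple b₁) (cs.simple b₂)) (hs : s ∈ J₁) :
    J₂ = ∅ := by
  refine Set.eq_empty_of_forall_notMem fun b hb => ?_
  obtain ⟨ω, hred, hω, hbω⟩ : b ∈ cs.support w := hunion ▸ Or.inr hb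
  have hJ₂ : J₂ ⊆ {b | b ≠ s} := fun x hx (hxs : x = s) =>
    Set.disjoint_left.mp hdisj hs (hxs ▸ hx)
  refine hmin.forall_notMem_of_commute hJ₂ hred hω (fun a _ c hc ha hcJ₂ => ?_) b hbω hb
  have hcJ : c ∈ J₁ ∪ J₂ := hunion ▸ ⟨ω, hred, hω, hc⟩
  exact (hcomm c (hcJ.resolve_right hcJ₂) a ha).symm

end CoxeterSystem

/-- **Supports of escaping minimal coset representatives are irreducible.**
(Lemma `lem:irreducible` in the paper.)  Let `(W, S)` be a Coxeter system, `s ∈ S`, and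
`I = S \ {s}`.  Let `w ∈ W \ W_I` be the minimal length element of its right coset `W_I w`.
Then `s ∈ Supp(w)`, and `Supp(w)` is irreducible: it cannot be partitioned into two nonempty
subsets `J₁, J₂` such that every simple reflection indexed by `J₁` commutes with every simple
reflection indexed by `J₂` (equivalently, `Supp(w)` spans a connected subgraph of the Coxeter
diagram).  Here `Supp(w)` is the set of letters appearing in some reduced expression of `w`. -/
theorem coxeter_escaping_coset_rep_support_irreducible
    {B : Type*} {W : Type*} [Group W] {M : CoxeterMatrix B}
    (cs : CoxeterSystem M W) (s : B) (w : W)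
    (hw : w ∉ Subgroup.closure (cs.simple '' {b : B | b ≠ s}))
    (hmin : ∀ v ∈ Subgroup.closure (cs.simple '' {b : B | b ≠ s}),
      cs.length w ≤ cs.length (v * w)) :
    s ∈ {b : B | ∃ ω : List B, cs.IsReduced ω ∧ cs.wordProd ω = w ∧ b ∈ ω} ∧
    ¬ ∃ J₁ J₂ : Set B, J₁.Nonempty ∧ J₂.Nonempty ∧ Disjoint J₁ J₂ ∧
        J₁ ∪ J₂ = {b : B | ∃ ω : List B, cs.IsReduced ω ∧ cs.wordProd ω = w ∧ b ∈ ω} ∧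
        ∀ b₁ ∈ J₁, ∀ b₂ ∈ J₂, Commute (cs.simple b₁) (cs.simple b₂) := by
  have hmin : cs.IsMinimalInCoset {b | b ≠ s} w := hmin
  have hs : s ∈ cs.support w := cs.mem_support_of_notMem_closure s hw
  refine ⟨hs, ?_⟩
  rintro ⟨J₁, J₂, hJ₁, hJ₂, hdisj, hunion, hcomm⟩
  rcases (hunion ▸ hs : s ∈ J₁ ∪ J₂) with hs₁ | hs₂
  · exact hJ₂.ne_empty (hmin.eq_empty_of_union_eq_support hdisj hunion hcomm hs₁)
  · refine hJ₁.ne_empty (hmin.eq_empty_of_union_eq_support hdisj.symm ?_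
      (fun b₂ hb₂ b₁ hb₁ => (hcomm b₁ hb₁ b₂ hb₂).symm) hs₂)
    rwa [Set.union_comm]
end

section
/- Let G be a group with subgroups A, B, C, and suppose B is the internal direct product of two subgroups B_1 and B_3 (B_1 and B_3 commute elementwise, B_1 ∩ B_3 = {1}, B_1 B_3 = B). Let g, h ∈ G and suppose there exist a, b ∈ B such that a B_3 ⊆ gA ∩ B and b B_1 ⊆ hC ∩ B. Then gA ∩ hC ≠ ∅. -/
/-- **Transitivity via a direct product decomposition of a middle subgroup.**
Let `G` be a group with subgroups `A`, `B`, `C`, and suppose `B` is the internal direct product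
of subgroups `B₁` and `B₃` (elementwise commuting, trivial intersection, `B₁ B₃ = B`).
If there are `a, b ∈ B` with `a B₃ ⊆ gA ∩ B` and `b B₁ ⊆ hC ∩ B`, then `gA ∩ hC ≠ ∅`. -/
theorem cosets_intersect_of_direct_product_middle
    {G : Type*} [Group G] (A B C B₁ B₃ : Subgroup G)
    (hB₁ : B₁ ≤ B) (hB₃ : B₃ ≤ B)
    (hcomm : ∀ x ∈ B₁, ∀ y ∈ B₃, Commute x y)
    (htriv : ∀ x : G, x ∈ B₁ → x ∈ B₃ → x = 1)
    (hprod : ∀ x ∈ B, ∃ y ∈ B₁, ∃ z ∈ B₃, x = y * z)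
    (g h a b : G) (ha : a ∈ B) (hb : b ∈ B)
    (haB₃ : ∀ x ∈ B₃, (∃ c ∈ A, a * x = g * c) ∧ a * x ∈ B)
    (hbB₁ : ∀ y ∈ B₁, (∃ c ∈ C, b * y = h * c) ∧ b * y ∈ B) :
    ∃ z : G, (∃ c ∈ A, z = g * c) ∧ (∃ c ∈ C, z = h * c) := by
  obtain ⟨a₁, ha₁, a₃, ha₃, haeq⟩ := hprod a ha
  obtain ⟨b₁, hb₁, b₃, hb₃, hbeq⟩ := hprod b hb
  refine ⟨a₁ * b₃, ?_, ?_⟩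
  · obtain ⟨⟨c, hc, hceq⟩, -⟩ := haB₃ (a₃⁻¹ * b₃) (mul_mem (inv_mem ha₃) hb₃)
    exact ⟨c, hc, by rw [← hceq, haeq]; group⟩
  · obtain ⟨⟨c, hc, hceq⟩, -⟩ := hbB₁ (b₁⁻¹ * a₁) (mul_mem (inv_mem hb₁) ha₁)
    refine ⟨c, hc, ?_⟩
    rw [← hceq, hbeq]
    have := (hcomm a₁ ha₁ b₃ hb₃).eq
    have := (hcomm b₁ hb₁ b₃ hb₃).eq
    -- b₁ * b₃ * (b₁⁻¹ * a₁) = b₃ * a₁ = a₁ * b₃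
    calc a₁ * b₃ = b₃ * a₁ := (hcomm a₁ ha₁ b₃ hb₃).eq
      _ = b₁ * b₃ * (b₁⁻¹ * a₁) := by
          rw [(hcomm b₁ hb₁ b₃ hb₃).eq]; group
end
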